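/- Let $F$ be a finite field with $q$ elements, $n \geq 1$, $1 \leq r \leq n$. The number of $n \times n$ matrices $X$ over $F$ with $\mathrm{rank}(X) = r$ and $(1,1)$-entry equal to $1$ is $q^{-1}|M(n,n,r,q)| - q^{r-1}|M(n-1,n-1,r,q)| + q^{r-2}|M(n-1,n-1,r-1,q)|$. -/

import Mathlib

/-!
A matrix with `X₁₁ = 1` is determined by its first row, its first column and the Schur complement
`D - c b` of the corner, and its rank is one more than that of the Schur complement. So the matrices
counted on the left are `q^(2(n-1)) |M(n-1,n-1,r-1,q)|` in number, and the identity reduces to two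
recursions for `|M(k,k,s,q)|`. Both follow from `|M(k,k,s,q)| |GL_s(𝔽_q)| = (∏_{i<s} (q^k - q^i))²`,
proved by counting full-rank factorizations `X = B C`: those of a fixed `X` form a `GL_s`-torsor.
-/

open Matrix Module

theorem Submodule.finrank_prod {K V W : Type*} [Field K] [AddCommGroup V] [Module K V]
    [AddCommGroup W] [Module K W] (p : Submodule K V) (q : Submodule K W) [FiniteDimensional K p]
    [FiniteDimensional K q] :
    finrank K (p.prod q) = finrank K p + finrank K q := by
  let e : p.prod q ≃ₗ[K] p × q :=
    { toFun := fun x => (⟨x.1.1, x.2.1⟩, ⟨x.1.2, x.2.2⟩)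
      invFun := fun x => ⟨(x.1.1, x.2.1), ⟨x.1.2, x.2.2⟩⟩
      map_add' := fun _ _ => rfl
      map_smul' := fun _ _ => rfl
      left_inv := fun _ => rfl
      right_inv := fun _ => rfl }
  rw [e.finrank_eq, Module.finrank_prod]

theorem Nat.card_eq_card_mul_of_card_fiber {α β : Type*} [Finite α] [Finite β] (f : α → β)
    {c : ℕ} (h : ∀ b, Nat.card {a // f a = b} = c) : Nat.card α = Nat.card β * c := by
  have := Fintype.ofFinite β
  rw [Nat.card_congr (Equiv.sigmaFiberEquiv f).symm, Nat.card_sigma,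
    Finset.sum_congr rfl fun b _ => h b, Finset.sum_const, Finset.card_univ, smul_eq_mul,
    Nat.card_eq_fintype_card]

namespace Matrix

section SchurComplement

variable {F : Type*} [Field F] {l m n o : Type*}

theorem rank_fromBlocks_zero_zero [Fintype m] [Fintype o] (A : Matrix l m F) (D : Matrix n o F) :
    (fromBlocks A 0 0 D).rank = A.rank + D.rank := by
  let e₁ := LinearEquiv.sumArrowLequivProdArrow m o F F
  let e₂ := LinearEquiv.sumArrowLequivProdArrow l n F F
  have hblocks : (fromBlocks A 0 0 D).mulVecLin =
      e₂.symm.toLinearMap ∘ₗ A.mulVecLin.prodMap D.mulVecLin ∘ₗ e₁.toLinearMap := by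
    ext x i
    rcases i with i | i <;>
      simp [e₁, e₂, fromBlocks_mulVec, LinearEquiv.sumArrowLequivProdArrow,
        Equiv.sumArrowEquivProdArrow]
  rw [Matrix.rank, hblocks, LinearMap.range_comp, LinearMap.range_comp_of_range_eq_top _ e₁.range,
    LinearEquiv.finrank_map_eq, LinearMap.range_prodMap, Submodule.finrank_prod]
  rfl

theorem rank_fromBlocks_of_invertible₁₁ [Fintype l] [Fintype m] [Fintype n]
    [DecidableEq l] [DecidableEq m] [DecidableEq n]
    (A : Matrix m m F) [Invertible A] (B : Matrix m n F) (C : Matrix l m F) (D : Matrix l n F) :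
    (fromBlocks A B C D).rank = Fintype.card m + (D - C * ⅟A * B).rank := by
  rw [fromBlocks_eq_of_invertible₁₁ A B C D, rank_mul_eq_left_of_isUnit_det,
    rank_mul_eq_right_of_isUnit_det, rank_fromBlocks_zero_zero,
    rank_of_isUnit A (isUnit_of_invertible A)]
  all_goals simp

theorem eq_fromBlocks_one_of_apply_inl_inl {Y : Matrix (Fin 1 ⊕ m) (Fin 1 ⊕ n) F}
    (h : Y (Sum.inl 0) (Sum.inl 0) = 1) :
    Y = fromBlocks 1 Y.toBlocks₁₂ Y.toBlocks₂₁ Y.toBlocks₂₂ := by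
  conv_lhs => rw [← fromBlocks_toBlocks Y]
  congr
  ext i j
  simpa [Subsingleton.elim i 0, Subsingleton.elim j 0, toBlocks₁₁, one_apply] using h

variable [Fintype m] [Fintype n] [DecidableEq m] [DecidableEq n]

theorem rank_fromBlocks_one (b : Matrix (Fin 1) n F) (c : Matrix m (Fin 1) F) (D : Matrix m n F) :
    (fromBlocks 1 b c D).rank = (D - c * b).rank + 1 := by
  let _ : Invertible (1 : Matrix (Fin 1) (Fin 1) F) := invertibleOne
  rw [rank_fromBlocks_of_invertible₁₁, invOf_one, Matrix.mul_one, Fintype.card_fin, add_comm]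

variable (F m n) in
noncomputable def cornerOneEquiv (r : ℕ) :
    {Y : Matrix (Fin 1 ⊕ m) (Fin 1 ⊕ n) F // Y.rank = r + 1 ∧ Y (Sum.inl 0) (Sum.inl 0) = 1} ≃
      Matrix (Fin 1) n F × Matrix m (Fin 1) F × {E : Matrix m n F // E.rank = r} where
  toFun Y := ⟨Y.1.toBlocks₁₂, Y.1.toBlocks₂₁, Y.1.toBlocks₂₂ - Y.1.toBlocks₂₁ * Y.1.toBlocks₁₂, by
    have := Y.2.1
    rw [eq_fromBlocks_one_of_apply_inl_inl Y.2.2, rank_fromBlocks_one] at this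
    omega⟩
  invFun bcE := ⟨fromBlocks 1 bcE.1 bcE.2.1 (bcE.2.2.1 + bcE.2.1 * bcE.1), by
    rw [rank_fromBlocks_one, add_sub_cancel_right, bcE.2.2.2]
    simp [fromBlocks]⟩
  left_inv Y := by
    ext : 1
    simpa using (eq_fromBlocks_one_of_apply_inl_inl Y.2.2).symm
  right_inv bcE := by
    simp

end SchurComplement

section FullRankFactorization

variable {F : Type*} [Field F] {m n k : Type*} [Fintype n] [Fintype k]

theorem exists_mul_eq_one_of_rank_eq_card_width [Fintype m] [DecidableEq m] [DecidableEq k]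
    {B : Matrix m k F} (hB : B.rank = Fintype.card k) : ∃ L : Matrix k m F, L * B = 1 := by
  have hker : LinearMap.ker B.mulVecLin = ⊥ := by
    have := B.mulVecLin.finrank_range_add_finrank_ker
    rw [← rank, hB, finrank_fintype_fun_eq_card] at this
    exact Submodule.finrank_eq_zero.mp (by omega)
  obtain ⟨g, hg⟩ := B.mulVecLin.exists_leftInverse_of_injective hker
  refine ⟨LinearMap.toMatrix' g, ?_⟩
  rw [← LinearMap.toMatrix'_toLin' B, ← LinearMap.toMatrix'_comp, toLin'_apply', hg,
    LinearMap.toMatrix'_id]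

theorem exists_mul_eq_one_of_rank_eq_card_height [DecidableEq n] [DecidableEq k]
    {C : Matrix k n F} (hC : C.rank = Fintype.card k) : ∃ R : Matrix n k F, C * R = 1 := by
  obtain ⟨L, hL⟩ := exists_mul_eq_one_of_rank_eq_card_width (B := Cᵀ) (by rwa [rank_transpose])
  exact ⟨Lᵀ, by rw [← transpose_transpose (C * Lᵀ), transpose_mul, transpose_transpose, hL,
    transpose_one]⟩

theorem rank_mul_of_rank_eq_card [DecidableEq n] [DecidableEq k] {B : Matrix m k F}
    {C : Matrix k n F} (hB : B.rank = Fintype.card k) (hC : C.rank = Fintype.card k) :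
    (B * C).rank = Fintype.card k := by
  obtain ⟨R, hR⟩ := exists_mul_eq_one_of_rank_eq_card_height hC
  refine le_antisymm (hB ▸ rank_mul_le_left B C) ?_
  calc Fintype.card k = (B * C * R).rank := by rw [Matrix.mul_assoc, hR, Matrix.mul_one, hB]
    _ ≤ (B * C).rank := rank_mul_le_left _ _

theorem exists_fullRank_factorization [DecidableEq n] {r : ℕ} {X : Matrix m n F}
    (hX : X.rank = r) : ∃ (B : Matrix m (Fin r) F) (C : Matrix (Fin r) n F),
      B.rank = r ∧ C.rank = r ∧ B * C = X := by
  let W := LinearMap.range X.mulVecLin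
  let e : W ≃ₗ[F] (Fin r → F) := LinearEquiv.ofFinrankEq _ _ (hX.trans (finrank_fin_fun F).symm)
  let g₁ : (Fin r → F) →ₗ[F] m → F := W.subtype ∘ₗ e.symm.toLinearMap
  let g₂ : (n → F) →ₗ[F] Fin r → F := e.toLinearMap ∘ₗ X.mulVecLin.rangeRestrict
  have hg₁ : LinearMap.range g₁ = W := by
    rw [LinearMap.range_comp_of_range_eq_top _ e.symm.range, Submodule.range_subtype]
  have hg₂ : LinearMap.range g₂ = ⊤ := by
    rw [LinearMap.range_comp_of_range_eq_top _ X.mulVecLin.range_rangeRestrict, e.range]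
  refine ⟨LinearMap.toMatrix' g₁, LinearMap.toMatrix' g₂, ?_, ?_, ?_⟩
  · rw [rank, ← toLin'_apply', toLin'_toMatrix', hg₁, ← hX]
    rfl
  · rw [rank, ← toLin'_apply', toLin'_toMatrix', hg₂, finrank_top, finrank_fin_fun]
  · rw [← LinearMap.toMatrix'_comp, ← LinearMap.toMatrix'_toLin' X, toLin'_apply']
    congr 1
    refine LinearMap.ext fun x => ?_
    simp [g₁, g₂]

variable [Fintype m] {r : ℕ}

variable (F m n r) in
abbrev FullRankPair :=
  {B : Matrix m (Fin r) F // B.rank = r} × {C : Matrix (Fin r) n F // C.rank = r}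

noncomputable def fullRankPairFiberEquivGL [DecidableEq m] [DecidableEq n]
    {B₀ : Matrix m (Fin r) F} {C₀ : Matrix (Fin r) n F} (hB₀ : B₀.rank = r) (hC₀ : C₀.rank = r)
    {L₀ : Matrix (Fin r) m F} {R₀ : Matrix n (Fin r) F} (hL₀ : L₀ * B₀ = 1) (hR₀ : C₀ * R₀ = 1) :
    GL (Fin r) F ≃ {BC : FullRankPair F m n r // BC.1.1 * BC.2.1 = B₀ * C₀} where
  toFun P := ⟨(⟨B₀ * P.1, by rwa [rank_mul_eq_left_of_isUnit_det _ _ (isUnits_det_units P)]⟩,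
    ⟨P⁻¹.1 * C₀, by rwa [rank_mul_eq_right_of_isUnit_det _ _ (isUnits_det_units P⁻¹)]⟩), by
    rw [Matrix.mul_assoc, ← Matrix.mul_assoc P.1, P.mul_inv, Matrix.one_mul]⟩
  invFun BC :=
    have h : L₀ * BC.1.1.1 * (BC.1.2.1 * R₀) = 1 := by
      rw [Matrix.mul_assoc, ← Matrix.mul_assoc BC.1.1.1, BC.2, ← Matrix.mul_assoc,
        ← Matrix.mul_assoc, hL₀, Matrix.one_mul, hR₀]
    ⟨L₀ * BC.1.1.1, BC.1.2.1 * R₀, h, mul_eq_one_comm.mp h⟩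
  left_inv P := by
    ext : 1
    simp [← Matrix.mul_assoc, hL₀]
  right_inv := by
    rintro ⟨⟨⟨B, hB⟩, ⟨C, hC⟩⟩, hBC⟩
    obtain ⟨L, hL⟩ := exists_mul_eq_one_of_rank_eq_card_width (hB.trans (Fintype.card_fin r).symm)
    obtain ⟨R, hR⟩ := exists_mul_eq_one_of_rank_eq_card_height (hC.trans (Fintype.card_fin r).symm)
    have hB' : B = B₀ * C₀ * R := by rw [← hBC, Matrix.mul_assoc, hR, Matrix.mul_one]
    have hC' : C = L * (B₀ * C₀) := by rw [← hBC, ← Matrix.mul_assoc, hL, Matrix.one_mul]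
    have hL₀' (Y : Matrix (Fin r) (Fin r) F) : L₀ * (B₀ * Y) = Y := by
      rw [← Matrix.mul_assoc, hL₀, Matrix.one_mul]
    have hR₀' (Y : Matrix (Fin r) n F) : C₀ * (R₀ * Y) = Y := by
      rw [← Matrix.mul_assoc, hR₀, Matrix.one_mul]
    refine Subtype.ext (Prod.ext (Subtype.ext ?_) (Subtype.ext ?_))
    · show B₀ * (L₀ * B) = B
      simp only [hB', Matrix.mul_assoc, hL₀']
    · show C * R₀ * C₀ = C
      simp only [hC', Matrix.mul_assoc, hR₀']

theorem card_rank_mul_card_GL [Finite F] (r : ℕ) :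
    Nat.card {X : Matrix m n F // X.rank = r} * Nat.card (GL (Fin r) F) =
      Nat.card {B : Matrix m (Fin r) F // B.rank = r} *
        Nat.card {C : Matrix (Fin r) n F // C.rank = r} := by
  classical
  refine (Nat.card_eq_card_mul_of_card_fiber (fun BC : FullRankPair F m n r =>
    (⟨BC.1.1 * BC.2.1, ?_⟩ : {X : Matrix m n F // X.rank = r})) fun ⟨X, hX⟩ => ?_).symm.trans
    (Nat.card_prod _ _)
  · simpa using
      rank_mul_of_rank_eq_card (k := Fin r) (by simpa using BC.1.2) (by simpa using BC.2.2)
  obtain ⟨B₀, C₀, hB₀, hC₀, rfl⟩ := exists_fullRank_factorization hX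
  obtain ⟨L₀, hL₀⟩ := exists_mul_eq_one_of_rank_eq_card_width (hB₀.trans (Fintype.card_fin r).symm)
  obtain ⟨R₀, hR₀⟩ := exists_mul_eq_one_of_rank_eq_card_height (hC₀.trans (Fintype.card_fin r).symm)
  rw [Nat.card_congr (fullRankPairFiberEquivGL hB₀ hC₀ hL₀ hR₀)]
  exact Nat.card_congr (Equiv.subtypeEquivRight fun _ => Subtype.ext_iff)

end FullRankFactorization

end Matrix

/-- The number `∏_{i<s} (q^k - q^i)` of linearly independent `s`-tuples in `𝔽_q^k`; the truncated
subtraction makes it vanish when `s > k`, as it should. -/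
def linIndepCount (q k s : ℕ) : ℕ := ∏ i : Fin s, (q ^ k - q ^ (i : ℕ))

theorem linIndepCount_succ_right (q k s : ℕ) :
    linIndepCount q k (s + 1) = linIndepCount q k s * (q ^ k - q ^ s) :=
  Fin.prod_univ_castSucc _

theorem linIndepCount_succ_succ (q k s : ℕ) :
    linIndepCount q (k + 1) (s + 1) = (q ^ (k + 1) - 1) * q ^ s * linIndepCount q k s := by
  have hfactor (i : ℕ) : q ^ (k + 1) - q ^ (i + 1) = q * (q ^ k - q ^ i) := by
    rw [Nat.mul_sub, pow_succ', pow_succ']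
  simp only [linIndepCount, Fin.prod_univ_succ, Fin.val_zero, pow_zero, Fin.val_succ, hfactor,
    Finset.prod_mul_distrib, Finset.prod_const, Finset.card_univ, Fintype.card_fin, mul_assoc]

theorem linIndepCount_self_pos {q : ℕ} (hq : 1 < q) (s : ℕ) : 0 < linIndepCount q s s :=
  Finset.prod_pos fun i _ => Nat.sub_pos_of_lt (Nat.pow_lt_pow_right hq i.2)

namespace Matrix

variable {F : Type*} [Field F] [Fintype F] {m n : Type*} [Fintype m] [Fintype n]

local notation "q" => Fintype.card F

theorem rank_eq_card_height_iff {C : Matrix m n F} :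
    C.rank = Fintype.card m ↔ LinearIndependent F C.row := by
  rw [rank_eq_finrank_span_row, linearIndependent_iff_card_eq_finrank_span, Set.finrank, eq_comm]

theorem card_rank_eq_height (s : ℕ) :
    Nat.card {C : Matrix (Fin s) n F // C.rank = s} = linIndepCount q (Fintype.card n) s := by
  by_cases hs : s ≤ Fintype.card n
  · rw [linIndepCount, ← finrank_fintype_fun_eq_card (R := F) (η := n),
      ← card_linearIndependent (by rwa [finrank_fintype_fun_eq_card])]
    refine Nat.card_congr (Equiv.subtypeEquiv of.symm fun C => ?_)
    have := rank_eq_card_height_iff (C := C)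
    rwa [Fintype.card_fin] at this
  · have : IsEmpty {C : Matrix (Fin s) n F // C.rank = s} :=
      ⟨fun C => hs (C.2 ▸ rank_le_card_width C.1)⟩
    rw [Nat.card_of_isEmpty, linIndepCount]
    exact (Finset.prod_eq_zero (Finset.mem_univ (⟨_, not_le.mp hs⟩ : Fin s)) (Nat.sub_self _)).symm

theorem card_rank_eq_width (s : ℕ) :
    Nat.card {B : Matrix m (Fin s) F // B.rank = s} = linIndepCount q (Fintype.card m) s := by
  rw [← card_rank_eq_height]
  exact Nat.card_congr (Equiv.subtypeEquiv (transposeAddEquiv _ _ _).toEquiv fun B => by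
    simp [rank_transpose])

theorem card_rank_mul_linIndepCount (r : ℕ) :
    Nat.card {X : Matrix m n F // X.rank = r} * linIndepCount q r r =
      linIndepCount q (Fintype.card m) r * linIndepCount q (Fintype.card n) r := by
  have := card_rank_mul_card_GL (F := F) (m := m) (n := n) r
  rwa [card_GL_field, card_rank_eq_width, card_rank_eq_height] at this

theorem card_rank_mul_linIndepCount_self (k s : ℕ) :
    Nat.card {X : Matrix (Fin k) (Fin k) F // X.rank = s} * linIndepCount q s s =
      linIndepCount q k s * linIndepCount q k s := by
  simpa using card_rank_mul_linIndepCount (F := F) (m := Fin k) (n := Fin k) s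

theorem card_rank_succ_succ (k s : ℕ) :
    (q ^ (s + 1) - 1) * Nat.card {X : Matrix (Fin (k + 1)) (Fin (k + 1)) F // X.rank = s + 1} =
      q ^ s * (q ^ (k + 1) - 1) ^ 2 * Nat.card {X : Matrix (Fin k) (Fin k) F // X.rank = s} := by
  have h₁ := card_rank_mul_linIndepCount_self (F := F) (k + 1) (s + 1)
  have h₀ := card_rank_mul_linIndepCount_self (F := F) k s
  rw [linIndepCount_succ_succ, linIndepCount_succ_succ] at h₁
  refine Nat.eq_of_mul_eq_mul_right (Nat.mul_pos (Nat.pow_pos (n := s) (Fintype.card_pos (α := F)))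
    (linIndepCount_self_pos (Fintype.one_lt_card (α := F)) s)) ?_
  linear_combination h₁ - q ^ s * q ^ s * (q ^ (k + 1) - 1) ^ 2 * h₀

theorem card_rank_succ_right (k s : ℕ) :
    q ^ s * (q ^ (s + 1) - 1) * Nat.card {X : Matrix (Fin k) (Fin k) F // X.rank = s + 1} =
      (q ^ k - q ^ s) ^ 2 * Nat.card {X : Matrix (Fin k) (Fin k) F // X.rank = s} := by
  have h₁ := card_rank_mul_linIndepCount_self (F := F) k (s + 1)
  have h₀ := card_rank_mul_linIndepCount_self (F := F) k s
  rw [linIndepCount_succ_succ, linIndepCount_succ_right] at h₁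
  refine Nat.eq_of_mul_eq_mul_right (linIndepCount_self_pos (Fintype.one_lt_card (α := F)) s) ?_
  linear_combination h₁ - (q ^ k - q ^ s) ^ 2 * h₀

theorem card_cornerOne (r : ℕ) :
    Nat.card {Y : Matrix (Fin 1 ⊕ m) (Fin 1 ⊕ n) F //
        Y.rank = r + 1 ∧ Y (Sum.inl 0) (Sum.inl 0) = 1} =
      q ^ Fintype.card n * q ^ Fintype.card m * Nat.card {E : Matrix m n F // E.rank = r} := by
  classical
  rw [Nat.card_congr (cornerOneEquiv F m n r), Nat.card_prod, Nat.card_prod, ← mul_assoc]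
  simp [Nat.card_eq_fintype_card, Matrix]

theorem card_rank_succ_apply_zero_zero_eq_one (k s : ℕ) :
    Nat.card {X : Matrix (Fin (k + 1)) (Fin (k + 1)) F // X.rank = s + 1 ∧ X 0 0 = 1} =
      q ^ k * q ^ k * Nat.card {X : Matrix (Fin k) (Fin k) F // X.rank = s} := by
  let e : Fin (k + 1) ≃ Fin 1 ⊕ Fin k := (finCongr (add_comm k 1)).trans finSumFinEquiv.symm
  have he : e.symm (Sum.inl 0) = 0 := rfl
  have := card_cornerOne (F := F) (m := Fin k) (n := Fin k) s
  rw [Fintype.card_fin] at this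
  rw [← this]
  refine Nat.card_congr (Equiv.subtypeEquiv (reindex e e) fun X => ?_)
  rw [rank_reindex, reindex_apply, submatrix_apply, he]

end Matrix

/-- the number of `n × n` matrices of rank `r` over `F_q` with `(1,1)`-entry `1`. -/
theorem stmt3 (F : Type) [Field F] [Fintype F] (q : ℕ) (hq : q = Fintype.card F)
    (n r : ℕ) (hn : 1 ≤ n) (hr : 1 ≤ r) (hrn : r ≤ n) :
    (Nat.card {X : Matrix (Fin n) (Fin n) F // X.rank = r ∧ X ⟨0, hn⟩ ⟨0, hn⟩ = 1} : ℚ) =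
      (q : ℚ)⁻¹ * Nat.card {X : Matrix (Fin n) (Fin n) F // X.rank = r} -
      (q : ℚ) ^ ((r : ℤ) - 1) *
        Nat.card {X : Matrix (Fin (n - 1)) (Fin (n - 1)) F // X.rank = r} +
      (q : ℚ) ^ ((r : ℤ) - 2) *
        Nat.card {X : Matrix (Fin (n - 1)) (Fin (n - 1)) F // X.rank = r - 1} := by
  obtain ⟨k, rfl⟩ : ∃ k, n = k + 1 := ⟨n - 1, by omega⟩
  obtain ⟨s, rfl⟩ : ∃ s, r = s + 1 := ⟨r - 1, by omega⟩
  have hcorner := card_rank_succ_apply_zero_zero_eq_one (F := F) k s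
  have hsucc := card_rank_succ_succ (F := F) k s
  have hright := card_rank_succ_right (F := F) k s
  have hq₁ : 1 < q := hq ▸ Fintype.one_lt_card
  rw [← hq] at hcorner hsucc hright
  have hQ : (q : ℚ) ≠ 0 := by positivity
  have hD : (q : ℚ) ^ (s + 1) - 1 ≠ 0 :=
    (sub_pos.mpr (one_lt_pow₀ (by exact_mod_cast hq₁) s.succ_ne_zero)).ne'
  replace hsucc := congrArg (Nat.cast : ℕ → ℚ) hsucc
  replace hright := congrArg (Nat.cast : ℕ → ℚ) hright
  push_cast [Nat.one_le_pow _ _ (by omega : 0 < q),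
    Nat.pow_le_pow_right (by omega : 0 < q) (by omega : s ≤ k)] at hsucc hright
  rw [Nat.add_sub_cancel, Nat.add_sub_cancel, show (⟨0, hn⟩ : Fin (k + 1)) = 0 from rfl, hcorner,
    show ((s + 1 : ℕ) : ℤ) - 1 = s by omega, show ((s + 1 : ℕ) : ℤ) - 2 = s - 1 by omega,
    zpow_natCast, zpow_sub₀ hQ, zpow_natCast, zpow_one]
  push_cast
  field_simp
  refine mul_left_cancel₀ hD ?_
  linear_combination -hsucc + q * hright
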